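/- arXiv:1501.05157 — 6 statements merged into one kernel-verified Lean document; each statement's English description precedes it below -/
import Mathlib

section
/- Let M be a Fishburn matrix with induced poset R on the set X_M, and suppose (T,S,R) is a Fishburn triple on X_M. Then for all x, y ∈ X_M with cells c_x = (i_x,j_x) and c_y = (i_y,j_y): (1) if c_x is strictly SW of c_y then x S y; (2) if c_x is strictly NW of c_y then x T y; (3) if x S y then i_x ≥ i_y and j_x ≤ j_y; (4) if x T y then i_x ≤ i_y and j_x ≤ j_y. -/
open scoped Classical

namespace FishburnPaper

universe u

/-- A strict partial order: irreflexive and transitive. -/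
def StrictOrd {X : Type u} (Q : X → X → Prop) : Prop :=
  (∀ x, ¬ Q x x) ∧ ∀ ⦃x y z⦄, Q x y → Q y z → Q x z

/-- `x` and `y` are comparable by the relation `Q`. -/
def Cmp {X : Type u} (Q : X → X → Prop) (x y : X) : Prop := Q x y ∨ Q y x

/-- Exactly one of the three propositions holds. -/
def ExactlyOne3 (a b c : Prop) : Prop :=
  (a ∨ b ∨ c) ∧ ¬ (a ∧ b) ∧ ¬ (a ∧ c) ∧ ¬ (b ∧ c)

/-- A C1-pair: `S` and `R` are strict partial orders, any two distinct elements are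
comparable by exactly one of them, and `x S y → y R z → x R z` for distinct `x,y,z`. -/
def IsC1Pair {X : Type u} (S R : X → X → Prop) : Prop :=
  StrictOrd S ∧ StrictOrd R ∧
  (∀ x y : X, x ≠ y → Xor' (Cmp S x y) (Cmp R x y)) ∧
  (∀ x y z : X, x ≠ y → y ≠ z → x ≠ z → S x y → R y z → R x z)

/-- A C2-pair: `R` and `T ∪ R` are strict partial orders, any two distinct elements are
comparable by exactly one of `T` and `R`, and the two three-element patterns are forbidden. -/
def IsC2Pair {X : Type u} (T R : X → X → Prop) : Prop :=
  StrictOrd R ∧ StrictOrd (fun x y => T x y ∨ R x y) ∧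
  (∀ x y : X, x ≠ y → Xor' (Cmp T x y) (Cmp R x y)) ∧
  (¬ ∃ x y z : X, x ≠ y ∧ y ≠ z ∧ x ≠ z ∧ T x y ∧ T x z ∧ R y z) ∧
  (¬ ∃ x y z : X, x ≠ y ∧ y ≠ z ∧ x ≠ z ∧ T y x ∧ T z x ∧ R y z)

/-- A Fishburn triple: `S`, `R` and `T ∪ R` are strict partial orders, any two distinct
elements are comparable by exactly one of `T`, `S`, `R`, the axioms C1c, C1c* hold,
and the two three-element patterns of axiom C2c are forbidden. -/
def IsFishburnTriple {X : Type u} (T S R : X → X → Prop) : Prop :=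
  StrictOrd S ∧ StrictOrd R ∧ StrictOrd (fun x y => T x y ∨ R x y) ∧
  (∀ x y : X, x ≠ y → ExactlyOne3 (Cmp T x y) (Cmp S x y) (Cmp R x y)) ∧
  (∀ x y z : X, x ≠ y → y ≠ z → x ≠ z → S x y → R y z → R x z) ∧
  (∀ x y z : X, x ≠ y → y ≠ z → x ≠ z → S x y → R z y → R z x) ∧
  (¬ ∃ x y z : X, x ≠ y ∧ y ≠ z ∧ x ≠ z ∧ T x y ∧ T x z ∧ R y z) ∧
  (¬ ∃ x y z : X, x ≠ y ∧ y ≠ z ∧ x ≠ z ∧ T y x ∧ T z x ∧ R z y)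

/-- `R` contains the poset 2+2: four distinct elements `a,b,c,d` with `a R b`, `c R d`,
and no other ordered pair among them in `R`. -/
def Contains22 {X : Type u} (R : X → X → Prop) : Prop :=
  ∃ a b c d : X, a ≠ b ∧ a ≠ c ∧ a ≠ d ∧ b ≠ c ∧ b ≠ d ∧ c ≠ d ∧
    R a b ∧ R c d ∧
    ¬ R b a ∧ ¬ R a c ∧ ¬ R c a ∧ ¬ R a d ∧ ¬ R d a ∧
    ¬ R b c ∧ ¬ R c b ∧ ¬ R b d ∧ ¬ R d b ∧ ¬ R d c

/-- `R` contains the poset 3+1: four distinct elements `a,b,c,d` with `a R b`, `b R c`,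
`a R c`, and `d` incomparable to each of `a,b,c`. -/
def Contains31 {X : Type u} (R : X → X → Prop) : Prop :=
  ∃ a b c d : X, a ≠ b ∧ a ≠ c ∧ a ≠ d ∧ b ≠ c ∧ b ≠ d ∧ c ≠ d ∧
    R a b ∧ R b c ∧ R a c ∧ ¬ Cmp R d a ∧ ¬ Cmp R d b ∧ ¬ Cmp R d c

/-- `R` contains the poset N: four distinct elements `u,v,x,y` with `u R v`, `u R y`,
`x R v`, and no other ordered pair among them in `R`. -/
def ContainsN {X : Type u} (R : X → X → Prop) : Prop :=
  ∃ u v x y : X, u ≠ v ∧ u ≠ x ∧ u ≠ y ∧ v ≠ x ∧ v ≠ y ∧ x ≠ y ∧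
    R u v ∧ R u y ∧ R x v ∧
    ¬ R v u ∧ ¬ R u x ∧ ¬ R x u ∧ ¬ R y u ∧ ¬ R v x ∧ ¬ R v y ∧
    ¬ R y v ∧ ¬ R x y ∧ ¬ R y x

/-- Number of `Q`-maximal elements. -/
noncomputable def mmax {X : Type u} (Q : X → X → Prop) : ℕ :=
  Nat.card {x : X // ∀ y : X, ¬ Q x y}

/-- A Fishburn matrix: upper triangular (rows numbered top to bottom), every row and
every column contains a nonzero entry. -/
def IsFishburn {m : ℕ} (M : Fin m → Fin m → ℕ) : Prop :=
  (∀ i j : Fin m, j < i → M i j = 0) ∧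
  (∀ i : Fin m, ∃ j : Fin m, M i j ≠ 0) ∧
  (∀ j : Fin m, ∃ i : Fin m, M i j ≠ 0)

/-- A cell `(i, j)` of an `m × m` matrix. -/
abbrev Cell (m : ℕ) := Fin m × Fin m

/-- Cell `c = (i,j)` is smaller than `c' = (i',j')` if `j < i'`. -/
def Smaller {m : ℕ} (c c' : Cell m) : Prop := c.2 < c'.1

/-- Cells `c` and `c'` are incomparable: neither is smaller than the other. -/
def Incomp {m : ℕ} (c c' : Cell m) : Prop := ¬ Smaller c c' ∧ ¬ Smaller c' c

/-- `c = (i,j)` is strictly SW of `c' = (i',j')` : `i > i'` and `j < j'`. -/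
def StrictSW {m : ℕ} (c c' : Cell m) : Prop := c'.1 < c.1 ∧ c.2 < c'.2

/-- `c = (i,j)` is weakly SW of `c' = (i',j')` : `c ≠ c'`, `i ≥ i'` and `j ≤ j'`. -/
def WeakSW {m : ℕ} (c c' : Cell m) : Prop := c ≠ c' ∧ c'.1 ≤ c.1 ∧ c.2 ≤ c'.2

/-- `c = (i,j)` is strictly NW of `c' = (i',j')` : incomparable, `i < i'` and `j < j'`. -/
def StrictNW {m : ℕ} (c c' : Cell m) : Prop := Incomp c c' ∧ c.1 < c'.1 ∧ c.2 < c'.2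

/-- `c = (i,j)` is weakly NW of `c' = (i',j')` : `c ≠ c'`, incomparable, `i ≤ i'`, `j ≤ j'`. -/
def WeakNW {m : ℕ} (c c' : Cell m) : Prop := c ≠ c' ∧ Incomp c c' ∧ c.1 ≤ c'.1 ∧ c.2 ≤ c'.2

/-- A nonzero cell of `M` (on or above the diagonal). -/
def NonzeroCell {m : ℕ} (M : Fin m → Fin m → ℕ) (c : Cell m) : Prop :=
  c.1 ≤ c.2 ∧ M c.1 c.2 ≠ 0

/-- The ground set `X_M = {(i,j,a) : i ≤ j, a < M i j}` of the poset induced by `M`. -/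
abbrev XM {m : ℕ} (M : Fin m → Fin m → ℕ) : Type :=
  {x : Fin m × Fin m × ℕ // x.1 ≤ x.2.1 ∧ x.2.2 < M x.1 x.2.1}

/-- The cell representing an element of `X_M`. -/
def cellOf {m : ℕ} {M : Fin m → Fin m → ℕ} (x : XM M) : Cell m := (x.1.1, x.1.2.1)

/-- The interval order induced by `M`: `(i,j,a) R (i',j',a')` iff `j < i'`. -/
def Rind {m : ℕ} {M : Fin m → Fin m → ℕ} (x y : XM M) : Prop := x.1.2.1 < y.1.1

/-- A nonzero cell with no other nonzero cell weakly NE of it. -/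
def IsWNECell {m : ℕ} (M : Fin m → Fin m → ℕ) (c : Cell m) : Prop :=
  NonzeroCell M c ∧ ∀ c' : Cell m, NonzeroCell M c' → c' ≠ c → ¬ WeakSW c c'

/-- A nonzero cell with no other nonzero cell strictly NE of it. -/
def IsSNECell {m : ℕ} (M : Fin m → Fin m → ℕ) (c : Cell m) : Prop :=
  NonzeroCell M c ∧ ∀ c' : Cell m, NonzeroCell M c' → c' ≠ c → ¬ StrictSW c c'

/-- A nonzero cell with no other nonzero cell strictly SE of it. -/
def IsSSECell {m : ℕ} (M : Fin m → Fin m → ℕ) (c : Cell m) : Prop :=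
  NonzeroCell M c ∧ ∀ c' : Cell m, NonzeroCell M c' → c' ≠ c → ¬ StrictNW c c'

/-- A nonzero cell with no other nonzero cell weakly SE of it. -/
def IsWSECell {m : ℕ} (M : Fin m → Fin m → ℕ) (c : Cell m) : Prop :=
  NonzeroCell M c ∧ ∀ c' : Cell m, NonzeroCell M c' → c' ≠ c → ¬ WeakNW c c'

/-- The number of wNE-cells of `M`. -/
noncomputable def wNEcount {m : ℕ} (M : Fin m → Fin m → ℕ) : ℕ :=
  Nat.card {c : Cell m // IsWNECell M c}

/-- The number of wSE-cells of `M`. -/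
noncomputable def wSEcount {m : ℕ} (M : Fin m → Fin m → ℕ) : ℕ :=
  Nat.card {c : Cell m // IsWSECell M c}

/-- The total weight of the sNE-cells of `M`. -/
noncomputable def sNEweight {m : ℕ} (M : Fin m → Fin m → ℕ) : ℕ :=
  ∑ c : Cell m, if IsSNECell M c then M c.1 c.2 else 0

/-- The total weight of the sSE-cells of `M`. -/
noncomputable def sSEweight {m : ℕ} (M : Fin m → Fin m → ℕ) : ℕ :=
  ∑ c : Cell m, if IsSSECell M c then M c.1 c.2 else 0

/-- The weight of `M`: the sum of all entries. -/
def weight {m : ℕ} (M : Fin m → Fin m → ℕ) : ℕ := ∑ c : Cell m, M c.1 c.2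

/-- The weight of the last column of `M`. -/
def lastColWeight {m : ℕ} (M : Fin m → Fin m → ℕ) : ℕ :=
  ∑ c : Cell m, if c.2.val = m - 1 then M c.1 c.2 else 0

/-- The total weight of the columns of `M` preceding the last one. -/
def prevColWeight {m : ℕ} (M : Fin m → Fin m → ℕ) : ℕ :=
  ∑ c : Cell m, if c.2.val < m - 1 then M c.1 c.2 else 0

/-- The first component of the F1-triple of `M`: `x T₁ y` iff `c_x` strictly NW of `c_y`. -/
def T1 {m : ℕ} {M : Fin m → Fin m → ℕ} (x y : XM M) : Prop :=
  StrictNW (cellOf x) (cellOf y)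

/-- The second component of the F1-triple of `M`: `x S₁ y` iff `c_x` weakly SW of `c_y`,
or `c_x = c_y` and the third coordinate of `x` is smaller than that of `y`. -/
def S1 {m : ℕ} {M : Fin m → Fin m → ℕ} (x y : XM M) : Prop :=
  WeakSW (cellOf x) (cellOf y) ∨ (cellOf x = cellOf y ∧ x.1.2.2 < y.1.2.2)

/-- The first component of the F2-triple of `M`: `x T₂ y` iff `c_x` weakly NW of `c_y`,
or `c_x = c_y` and the third coordinate of `x` is smaller than that of `y`. -/
def T2 {m : ℕ} {M : Fin m → Fin m → ℕ} (x y : XM M) : Prop :=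
  WeakNW (cellOf x) (cellOf y) ∨ (cellOf x = cellOf y ∧ x.1.2.2 < y.1.2.2)

/-- The second component of the F2-triple of `M`: `x S₂ y` iff `c_x` strictly SW of `c_y`. -/
def S2 {m : ℕ} {M : Fin m → Fin m → ℕ} (x y : XM M) : Prop :=
  StrictSW (cellOf x) (cellOf y)

/-- C1-pairs on `Fin n`. -/
abbrev C1PairsOn (n : ℕ) :=
  {p : (Fin n → Fin n → Prop) × (Fin n → Fin n → Prop) // IsC1Pair p.1 p.2}

/-- C2-pairs on `Fin n`. -/
abbrev C2PairsOn (n : ℕ) :=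
  {p : (Fin n → Fin n → Prop) × (Fin n → Fin n → Prop) // IsC2Pair p.1 p.2}

/-- Isomorphism of C1-pairs. -/
def isoC1 {n : ℕ} (p q : C1PairsOn n) : Prop :=
  ∃ f : Fin n ≃ Fin n, ∀ x y : Fin n,
    (p.1.1 x y ↔ q.1.1 (f x) (f y)) ∧ (p.1.2 x y ↔ q.1.2 (f x) (f y))

/-- Isomorphism of C2-pairs. -/
def isoC2 {n : ℕ} (p q : C2PairsOn n) : Prop :=
  ∃ f : Fin n ≃ Fin n, ∀ x y : Fin n,
    (p.1.1 x y ↔ q.1.1 (f x) (f y)) ∧ (p.1.2 x y ↔ q.1.2 (f x) (f y))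

/-- Fishburn matrices of weight `n` (of arbitrary size `m ≥ 1`). -/
abbrev FishburnW (n : ℕ) :=
  {p : Σ m : ℕ, Fin m → Fin m → ℕ // 0 < p.1 ∧ IsFishburn p.2 ∧ weight p.2 = n}


lemma colW {m : ℕ} {M : Fin m → Fin m → ℕ} (hM : IsFishburn M) (j : Fin m) :
    ∃ z : XM M, z.1.2.1 = j := by
  obtain ⟨i, hi⟩ := hM.2.2 j
  have hle : i ≤ j := by
    by_contra hc
    exact hi (hM.1 i j (lt_of_not_ge hc))
  exact ⟨⟨(i, j, 0), hle, Nat.pos_of_ne_zero hi⟩, rfl⟩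

lemma rowW {m : ℕ} {M : Fin m → Fin m → ℕ} (hM : IsFishburn M) (i : Fin m) :
    ∃ z : XM M, z.1.1 = i := by
  obtain ⟨j, hj⟩ := hM.2.1 i
  have hle : i ≤ j := by
    by_contra hc
    exact hj (hM.1 i j (lt_of_not_ge hc))
  exact ⟨⟨(i, j, 0), hle, Nat.pos_of_ne_zero hj⟩, rfl⟩

/-- Lemma 7 (lem-fish), numbered claims: constraints relating the components of a
Fishburn triple extending the poset induced by a Fishburn matrix to cell positions. -/
theorem stmt_10 {m : ℕ} (hm : 0 < m) (M : Fin m → Fin m → ℕ) (hM : IsFishburn M)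
    (T S : XM M → XM M → Prop) (h : IsFishburnTriple T S (Rind (M := M)))
    (x y : XM M) :
    (StrictSW (cellOf x) (cellOf y) → S x y) ∧
    (StrictNW (cellOf x) (cellOf y) → T x y) ∧
    (S x y → (cellOf y).1 ≤ (cellOf x).1 ∧ (cellOf x).2 ≤ (cellOf y).2) ∧
    (T x y → (cellOf x).1 ≤ (cellOf y).1 ∧ (cellOf x).2 ≤ (cellOf y).2) := by
  obtain ⟨hS, hR, hTR, hEx, hC1, hC1s, hP1, hP2⟩ := h
  -- Claim (3a): x S y → i_y ≤ i_x
  have h3a : ∀ x y : XM M, S x y → y.1.1 ≤ x.1.1 := by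
    intro x y hs
    by_contra hlt
    rw [not_le, Fin.lt_def] at hlt
    have hne : x ≠ y := fun he => hS.1 y (he ▸ hs)
    have hym : (y.1.1 : ℕ) - 1 < m := by omega
    obtain ⟨z, hz⟩ := colW hM ⟨(y.1.1 : ℕ) - 1, hym⟩
    have hzval : (z.1.2.1 : ℕ) = (y.1.1 : ℕ) - 1 := by rw [hz]
    have hzRy : Rind z y := by
      show z.1.2.1 < y.1.1
      rw [Fin.lt_def]; omega
    have hzy : z ≠ y := fun he => hR.1 y (he ▸ hzRy)
    have hxz : x ≠ z := by
      intro he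
      exact (hEx x y hne).2.2.2 ⟨Or.inl hs, Or.inl (he ▸ hzRy)⟩
    have : Rind z x := hC1s x y z hne hzy.symm hxz hs hzRy
    have : (z.1.2.1 : ℕ) < (x.1.1 : ℕ) := this
    omega
  -- Claim (3b): x S y → j_x ≤ j_y
  have h3b : ∀ x y : XM M, S x y → x.1.2.1 ≤ y.1.2.1 := by
    intro x y hs
    by_contra hlt
    rw [not_le, Fin.lt_def] at hlt
    have hne : x ≠ y := fun he => hS.1 y (he ▸ hs)
    have him : (y.1.2.1 : ℕ) + 1 < m := by
      have := x.1.2.1.isLt; omega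
    obtain ⟨w, hw⟩ := rowW hM ⟨(y.1.2.1 : ℕ) + 1, him⟩
    have hwval : (w.1.1 : ℕ) = (y.1.2.1 : ℕ) + 1 := by rw [hw]
    have hyRw : Rind y w := by
      show y.1.2.1 < w.1.1
      rw [Fin.lt_def]; omega
    have hyw : y ≠ w := fun he => hR.1 w (he ▸ hyRw)
    have hxw : x ≠ w := by
      intro he
      exact (hEx x y hne).2.2.2 ⟨Or.inl hs, Or.inr (he ▸ hyRw)⟩
    have : Rind x w := hC1 x y w hne hyw hxw hs hyRw
    have : (x.1.2.1 : ℕ) < (w.1.1 : ℕ) := this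
    omega
  -- Claim (4a): x T y → i_x ≤ i_y
  have h4a : ∀ x y : XM M, T x y → x.1.1 ≤ y.1.1 := by
    intro x y ht
    by_contra hlt
    rw [not_le, Fin.lt_def] at hlt
    have hne : x ≠ y := fun he => hTR.1 y (Or.inl (he ▸ ht))
    have hnotR : ¬ Cmp (Rind (M := M)) x y :=
      fun hc => (hEx x y hne).2.2.1 ⟨Or.inl ht, hc⟩
    have hnRxy : ¬ ((x.1.2.1 : ℕ) < (y.1.1 : ℕ)) := fun hc => hnotR (Or.inl hc)
    have hnRyx : ¬ ((y.1.2.1 : ℕ) < (x.1.1 : ℕ)) := fun hc => hnotR (Or.inr hc)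
    have hjm : (x.1.1 : ℕ) - 1 < m := by omega
    obtain ⟨z, hz⟩ := colW hM ⟨(x.1.1 : ℕ) - 1, hjm⟩
    have hzval : (z.1.2.1 : ℕ) = (x.1.1 : ℕ) - 1 := by rw [hz]
    have hzRx : Rind z x := by
      show z.1.2.1 < x.1.1
      rw [Fin.lt_def]; omega
    have hnotzRy : ¬ Rind z y := by
      intro hc
      have : (z.1.2.1 : ℕ) < (y.1.1 : ℕ) := hc
      omega
    have hzTRy : T z y ∨ Rind z y := hTR.2 (Or.inr hzRx) (Or.inl ht)
    have hzTy : T z y := hzTRy.resolve_right hnotzRy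
    have hzx : z ≠ x := fun he => hR.1 x (he ▸ hzRx)
    have hyz : y ≠ z := fun he => hTR.1 y (Or.inl (he ▸ hzTy))
    exact hP2 ⟨y, x, z, hne.symm, hzx.symm, hyz, ht, hzTy, hzRx⟩
  -- Claim (4b): x T y → j_x ≤ j_y
  have h4b : ∀ x y : XM M, T x y → x.1.2.1 ≤ y.1.2.1 := by
    intro x y ht
    by_contra hlt
    rw [not_le, Fin.lt_def] at hlt
    have hne : x ≠ y := fun he => hTR.1 y (Or.inl (he ▸ ht))
    have hnotR : ¬ Cmp (Rind (M := M)) x y :=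
      fun hc => (hEx x y hne).2.2.1 ⟨Or.inl ht, hc⟩
    have hnRxy : ¬ ((x.1.2.1 : ℕ) < (y.1.1 : ℕ)) := fun hc => hnotR (Or.inl hc)
    have hnRyx : ¬ ((y.1.2.1 : ℕ) < (x.1.1 : ℕ)) := fun hc => hnotR (Or.inr hc)
    have him : (y.1.2.1 : ℕ) + 1 < m := by
      have := x.1.2.1.isLt; omega
    obtain ⟨w, hw⟩ := rowW hM ⟨(y.1.2.1 : ℕ) + 1, him⟩
    have hwval : (w.1.1 : ℕ) = (y.1.2.1 : ℕ) + 1 := by rw [hw]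
    have hyRw : Rind y w := by
      show y.1.2.1 < w.1.1
      rw [Fin.lt_def]; omega
    have hnotxRw : ¬ Rind x w := by
      intro hc
      have : (x.1.2.1 : ℕ) < (w.1.1 : ℕ) := hc
      omega
    have hxTRw : T x w ∨ Rind x w := hTR.2 (Or.inl ht) (Or.inr hyRw)
    have hxTw : T x w := hxTRw.resolve_right hnotxRw
    have hyw : y ≠ w := fun he => hR.1 w (he ▸ hyRw)
    have hxw : x ≠ w := fun he => hTR.1 w (Or.inl (he ▸ hxTw))
    exact hP1 ⟨x, y, w, hne, hyw, hxw, ht, hxTw, hyRw⟩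
  refine ⟨?_, ?_, fun hs => ⟨h3a x y hs, h3b x y hs⟩, fun ht => ⟨h4a x y ht, h4b x y ht⟩⟩
  · -- (1): strictly SW → S x y
    rintro ⟨hi, hj⟩
    replace hi : y.1.1 < x.1.1 := hi
    replace hj : x.1.2.1 < y.1.2.1 := hj
    rw [Fin.lt_def] at hi hj
    have hxle : (x.1.1 : ℕ) ≤ (x.1.2.1 : ℕ) := x.2.1
    have hne : x ≠ y := by
      intro he; rw [he] at hi; omega
    have hnotR : ¬ Cmp (Rind (M := M)) x y := by
      rintro (hc | hc)
      · have : (x.1.2.1 : ℕ) < (y.1.1 : ℕ) := hc; omega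
      · have : (y.1.2.1 : ℕ) < (x.1.1 : ℕ) := hc; omega
    rcases (hEx x y hne).1 with hc | hc | hc
    · rcases hc with hc | hc
      · have := h4a x y hc; rw [Fin.le_def] at this; omega
      · have := h4b y x hc; rw [Fin.le_def] at this; omega
    · rcases hc with hc | hc
      · exact hc
      · have := h3a y x hc; rw [Fin.le_def] at this; omega
    · exact absurd hc hnotR
  · -- (2): strictly NW → T x y
    rintro ⟨⟨hinc1, hinc2⟩, hi, hj⟩
    replace hi : x.1.1 < y.1.1 := hi
    replace hj : x.1.2.1 < y.1.2.1 := hj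
    replace hinc1 : ¬ (x.1.2.1 < y.1.1) := hinc1
    replace hinc2 : ¬ (y.1.2.1 < x.1.1) := hinc2
    rw [Fin.lt_def] at hi hj
    have hne : x ≠ y := by
      intro he; rw [he] at hi; omega
    have hnotR : ¬ Cmp (Rind (M := M)) x y := by
      rintro (hc | hc)
      · exact hinc1 hc
      · exact hinc2 hc
    rcases (hEx x y hne).1 with hc | hc | hc
    · rcases hc with hc | hc
      · exact hc
      · have := h4a y x hc; rw [Fin.le_def] at this; omega
    · rcases hc with hc | hc
      · have := h3a x y hc; rw [Fin.le_def] at this; omega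
      · have := h3b y x hc; rw [Fin.le_def] at this; omega
    · exact absurd hc hnotR

end FishburnPaper
end

section
/- For every Fishburn matrix M, its F1-triple (T₁,S₁,R) is a Fishburn triple on X_M. -/
open scoped Classical

namespace FishburnPaper

universe u

/-- Lemma 8 (lem-fsft) for type 1: the F1-triple of a Fishburn matrix is a
Fishburn triple. -/
theorem stmt_11 {m : ℕ} (hm : 0 < m) (M : Fin m → Fin m → ℕ) (hM : IsFishburn M) :
    IsFishburnTriple (T1 (M := M)) (S1 (M := M)) (Rind (M := M)) := by
  classical
  refine ⟨⟨?_, ?_⟩, ⟨?_, ?_⟩, ⟨?_, ?_⟩, ?_, ?_, ?_, ?_, ?_⟩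
  · rintro ⟨⟨i, j, a⟩, hij, ha⟩ h
    simp only [S1, WeakSW, cellOf, ne_eq, Prod.mk.injEq, Fin.ext_iff, Fin.lt_def,
      Fin.le_def, not_and] at h
    rcases h with ⟨hT, -⟩ | ⟨-, h⟩
    · exact hT trivial
    · omega
  · rintro ⟨⟨i1, j1, a1⟩, h1, _⟩ ⟨⟨i2, j2, a2⟩, h2, _⟩ ⟨⟨i3, j3, a3⟩, h3, _⟩ hxy hyz
    replace h1 : (i1 : ℕ) ≤ (j1 : ℕ) := h1
    replace h2 : (i2 : ℕ) ≤ (j2 : ℕ) := h2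
    replace h3 : (i3 : ℕ) ≤ (j3 : ℕ) := h3
    simp only [S1, WeakSW, cellOf, ne_eq, Prod.mk.injEq, Fin.lt_def, Fin.le_def,
      Fin.ext_iff, not_and] at hxy hyz ⊢
    omega
  · rintro ⟨⟨i, j, a⟩, hij, _⟩ h
    replace hij : (i : ℕ) ≤ (j : ℕ) := hij
    simp only [Rind, Fin.lt_def] at h
    omega
  · rintro ⟨⟨i1, j1, a1⟩, h1, _⟩ ⟨⟨i2, j2, a2⟩, h2, _⟩ ⟨⟨i3, j3, a3⟩, h3, _⟩ hxy hyz
    replace h2 : (i2 : ℕ) ≤ (j2 : ℕ) := h2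
    simp only [Rind, Fin.lt_def] at hxy hyz ⊢
    omega
  · rintro ⟨⟨i, j, a⟩, hij, _⟩ h
    replace hij : (i : ℕ) ≤ (j : ℕ) := hij
    simp only [T1, Rind, StrictNW, Incomp, Smaller, cellOf, Fin.lt_def, not_lt] at h
    omega
  · rintro ⟨⟨i1, j1, a1⟩, h1, _⟩ ⟨⟨i2, j2, a2⟩, h2, _⟩ ⟨⟨i3, j3, a3⟩, h3, _⟩ hxy hyz
    replace h1 : (i1 : ℕ) ≤ (j1 : ℕ) := h1
    replace h2 : (i2 : ℕ) ≤ (j2 : ℕ) := h2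
    replace h3 : (i3 : ℕ) ≤ (j3 : ℕ) := h3
    simp only [T1, Rind, StrictNW, Incomp, Smaller, cellOf, Fin.lt_def, not_lt]
      at hxy hyz ⊢
    omega
  · rintro ⟨⟨i1, j1, a1⟩, h1, ha1⟩ ⟨⟨i2, j2, a2⟩, h2, ha2⟩ hne
    replace h1 : (i1 : ℕ) ≤ (j1 : ℕ) := h1
    replace h2 : (i2 : ℕ) ≤ (j2 : ℕ) := h2
    have hne' : ¬((i1 : ℕ) = i2 ∧ (j1 : ℕ) = j2 ∧ a1 = a2) := by
      rintro ⟨e1, e2, e3⟩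
      exact hne (Subtype.ext (by simp [Prod.ext_iff, Fin.ext_iff, e1, e2, e3]))
    simp only [ExactlyOne3, Cmp, T1, S1, Rind, StrictNW, WeakSW, Incomp, Smaller, cellOf,
      ne_eq, Prod.mk.injEq, Fin.lt_def, Fin.le_def, Fin.ext_iff, not_and, not_lt, not_or]
    omega
  · rintro ⟨⟨i1, j1, a1⟩, h1, _⟩ ⟨⟨i2, j2, a2⟩, h2, _⟩ ⟨⟨i3, j3, a3⟩, h3, _⟩ _ _ _ hS hR
    replace h2 : (i2 : ℕ) ≤ (j2 : ℕ) := h2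
    simp only [S1, Rind, WeakSW, cellOf, ne_eq, Prod.mk.injEq, Fin.lt_def, Fin.le_def,
      Fin.ext_iff, not_and] at hS hR ⊢
    omega
  · rintro ⟨⟨i1, j1, a1⟩, h1, _⟩ ⟨⟨i2, j2, a2⟩, h2, _⟩ ⟨⟨i3, j3, a3⟩, h3, _⟩ _ _ _ hS hR
    replace h2 : (i2 : ℕ) ≤ (j2 : ℕ) := h2
    simp only [S1, Rind, WeakSW, cellOf, ne_eq, Prod.mk.injEq, Fin.lt_def, Fin.le_def,
      Fin.ext_iff, not_and] at hS hR ⊢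
    omega
  · rintro ⟨⟨⟨i1, j1, a1⟩, h1, _⟩, ⟨⟨i2, j2, a2⟩, h2, _⟩, ⟨⟨i3, j3, a3⟩, h3, _⟩,
      _, _, _, hT1, hT2, hR⟩
    replace h1 : (i1 : ℕ) ≤ (j1 : ℕ) := h1
    replace h2 : (i2 : ℕ) ≤ (j2 : ℕ) := h2
    replace h3 : (i3 : ℕ) ≤ (j3 : ℕ) := h3
    simp only [T1, Rind, StrictNW, Incomp, Smaller, cellOf, Fin.lt_def, not_lt]
      at hT1 hT2 hR
    omega
  · rintro ⟨⟨⟨i1, j1, a1⟩, h1, _⟩, ⟨⟨i2, j2, a2⟩, h2, _⟩, ⟨⟨i3, j3, a3⟩, h3, _⟩,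
      _, _, _, hT1, hT2, hR⟩
    replace h1 : (i1 : ℕ) ≤ (j1 : ℕ) := h1
    replace h2 : (i2 : ℕ) ≤ (j2 : ℕ) := h2
    replace h3 : (i3 : ℕ) ≤ (j3 : ℕ) := h3
    simp only [T1, Rind, StrictNW, Incomp, Smaller, cellOf, Fin.lt_def, not_lt]
      at hT1 hT2 hR
    omega

end FishburnPaper
end

section
/- For every Fishburn matrix M, its F2-triple (T₂,S₂,R) is a Fishburn triple on X_M. -/
open scoped Classical

namespace FishburnPaper

universe u

/-- Lemma 8 (lem-fsft) for type 2: the F2-triple of a Fishburn matrix is a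
Fishburn triple. -/
theorem stmt_12 {m : ℕ} (hm : 0 < m) (M : Fin m → Fin m → ℕ) (hM : IsFishburn M) :
    IsFishburnTriple (T2 (M := M)) (S2 (M := M)) (Rind (M := M)) := by
  refine ⟨⟨?_, ?_⟩, ⟨?_, ?_⟩, ⟨?_, ?_⟩, ?_, ?_, ?_, ?_, ?_⟩
  · -- S2 irreflexive
    rintro ⟨⟨i, j, a⟩, hij, ha⟩ h
    simp only [S2, StrictSW, cellOf, Fin.lt_def] at h
    omega
  · -- S2 transitive
    rintro ⟨⟨i1, j1, a1⟩, h1, _⟩ ⟨⟨i2, j2, a2⟩, h2, _⟩ ⟨⟨i3, j3, a3⟩, h3, _⟩ hxy hyz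
    simp only [S2, StrictSW, cellOf, Fin.lt_def] at *
    omega
  · -- R irreflexive
    rintro ⟨⟨i, j, a⟩, hij, ha⟩ h
    simp only [Rind, Fin.lt_def] at h
    simp only [Fin.le_def] at hij
    omega
  · -- R transitive
    rintro ⟨⟨i1, j1, a1⟩, h1, _⟩ ⟨⟨i2, j2, a2⟩, h2, _⟩ ⟨⟨i3, j3, a3⟩, h3, _⟩ hxy hyz
    simp only [Rind, Fin.lt_def] at *
    simp only [Fin.le_def] at h1 h2 h3
    omega
  · -- T2 ∪ R irreflexive
    rintro ⟨⟨i, j, a⟩, hij, ha⟩ h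
    simp only [T2, Rind, WeakNW, Incomp, Smaller, cellOf] at h
    rcases h with (⟨hne, -⟩ | ⟨-, hlt⟩) | h
    · exact hne rfl
    · exact lt_irrefl _ hlt
    · exact absurd h (not_lt.mpr hij)
  · -- T2 ∪ R transitive
    rintro ⟨⟨i1, j1, a1⟩, h1, _⟩ ⟨⟨i2, j2, a2⟩, h2, _⟩ ⟨⟨i3, j3, a3⟩, h3, _⟩ hxy hyz
    simp only [T2, Rind, WeakNW, Incomp, Smaller, cellOf, Prod.mk.injEq, Fin.ext_iff,
      Fin.lt_def, Fin.le_def, ne_eq] at *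
    dsimp only at *
    omega
  · -- exactly one of T2, S2, R
    rintro ⟨⟨i1, j1, a1⟩, h1, _⟩ ⟨⟨i2, j2, a2⟩, h2, _⟩ hne
    simp only [ne_eq, Subtype.mk.injEq, Prod.mk.injEq, Fin.ext_iff] at hne
    simp only [Fin.le_def] at h1 h2
    simp only [ExactlyOne3, Cmp, T2, S2, Rind, WeakNW, StrictSW, Incomp, Smaller, cellOf,
      Prod.mk.injEq, Fin.ext_iff, Fin.lt_def, Fin.le_def, ne_eq]
    omega
  · -- C1c
    rintro ⟨⟨i1, j1, a1⟩, h1, _⟩ ⟨⟨i2, j2, a2⟩, h2, _⟩ ⟨⟨i3, j3, a3⟩, h3, _⟩ _ _ _ hS hR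
    simp only [S2, StrictSW, Rind, cellOf, Fin.lt_def] at *
    simp only [Fin.le_def] at h1 h2 h3
    omega
  · -- C1c*
    rintro ⟨⟨i1, j1, a1⟩, h1, _⟩ ⟨⟨i2, j2, a2⟩, h2, _⟩ ⟨⟨i3, j3, a3⟩, h3, _⟩ _ _ _ hS hR
    simp only [S2, StrictSW, Rind, cellOf, Fin.lt_def] at *
    simp only [Fin.le_def] at h1 h2 h3
    omega
  · -- no pattern x T y, x T z, y R z
    rintro ⟨⟨⟨i1, j1, a1⟩, h1, _⟩, ⟨⟨i2, j2, a2⟩, h2, _⟩, ⟨⟨i3, j3, a3⟩, h3, _⟩,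
      _, _, _, hT1, hT2, hR⟩
    simp only [T2, Rind, WeakNW, Incomp, Smaller, cellOf, Prod.mk.injEq, Fin.ext_iff,
      Fin.lt_def, Fin.le_def, ne_eq] at hT1 hT2 hR
    simp only [Fin.le_def] at h1 h2 h3
    omega
  · -- no pattern y T x, z T x, z R y
    rintro ⟨⟨⟨i1, j1, a1⟩, h1, _⟩, ⟨⟨i2, j2, a2⟩, h2, _⟩, ⟨⟨i3, j3, a3⟩, h3, _⟩,
      _, _, _, hT1, hT2, hR⟩
    simp only [T2, Rind, WeakNW, Incomp, Smaller, cellOf, Prod.mk.injEq, Fin.ext_iff,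
      Fin.lt_def, Fin.le_def, ne_eq] at hT1 hT2 hR
    simp only [Fin.le_def] at h1 h2 h3
    omega

end FishburnPaper
end

section
/- Let M be a Fishburn matrix with induced poset R on X_M, let (T₁,S₁,R) be its F1-triple and (T₂,S₂,R) its F2-triple. Then: mmax(S₁) equals the number of wNE-cells of M; mmax(S₂) equals the total weight (sum of entries) of the sNE-cells of M; mmax(T₁) equals the total weight of the sSE-cells of M; and mmax(T₂) equals the number of wSE-cells of M. -/
open scoped Classical

namespace FishburnPaper

universe u

section Aux

variable {m : ℕ} {M : Fin m → Fin m → ℕ}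

lemma nz_cellOf (x : XM M) : NonzeroCell M (cellOf x) :=
  ⟨x.2.1, fun h => absurd x.2.2 (by simp [cellOf] at h ⊢; omega)⟩

/-- Construct an element of `X_M` from a nonzero cell and an index. -/
def mkXM (c : Cell m) (hc : NonzeroCell M c) (a : ℕ) (ha : a < M c.1 c.2) : XM M :=
  ⟨(c.1, c.2, a), hc.1, ha⟩

lemma cellOf_mkXM (c : Cell m) (hc : NonzeroCell M c) (a : ℕ) (ha : a < M c.1 c.2) :
    cellOf (mkXM c hc a ha) = c := rfl

lemma S2_max_iff (x : XM M) : (∀ y : XM M, ¬ S2 x y) ↔ IsSNECell M (cellOf x) := by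
  constructor
  · intro h
    refine ⟨nz_cellOf x, fun c' hc' hne hsw => ?_⟩
    exact h (mkXM c' hc' 0 (Nat.pos_of_ne_zero hc'.2)) hsw
  · rintro ⟨_, h⟩ y hy
    have hy' : StrictSW (cellOf x) (cellOf y) := hy
    exact h (cellOf y) (nz_cellOf y)
      (fun e => by rw [e] at hy'; exact lt_irrefl _ hy'.1) hy'

lemma T1_max_iff (x : XM M) : (∀ y : XM M, ¬ T1 x y) ↔ IsSSECell M (cellOf x) := by
  constructor
  · intro h
    refine ⟨nz_cellOf x, fun c' hc' hne hnw => ?_⟩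
    exact h (mkXM c' hc' 0 (Nat.pos_of_ne_zero hc'.2)) hnw
  · rintro ⟨_, h⟩ y hy
    have hy' : StrictNW (cellOf x) (cellOf y) := hy
    exact h (cellOf y) (nz_cellOf y)
      (fun e => by rw [e] at hy'; exact lt_irrefl _ hy'.2.1) hy'

lemma S1_max_iff (x : XM M) :
    (∀ y : XM M, ¬ S1 x y) ↔
      IsWNECell M (cellOf x) ∧ x.1.2.2 = M x.1.1 x.1.2.1 - 1 := by
  constructor
  · intro h
    refine ⟨⟨nz_cellOf x, fun c' hc' hne hsw => ?_⟩, ?_⟩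
    · exact h (mkXM c' hc' 0 (Nat.pos_of_ne_zero hc'.2)) (Or.inl hsw)
    · by_contra ha
      have hlt : x.1.2.2 + 1 < M x.1.1 x.1.2.1 := by have := x.2.2; omega
      exact h (mkXM (cellOf x) (nz_cellOf x) (x.1.2.2 + 1) hlt)
        (Or.inr ⟨rfl, Nat.lt_succ_self _⟩)
  · rintro ⟨⟨_, h⟩, ha⟩ y hy
    rcases hy with hsw | ⟨hce, hab⟩
    · exact h (cellOf y) (nz_cellOf y) (Ne.symm hsw.1) hsw
    · have h1 : x.1.1 = y.1.1 ∧ x.1.2.1 = y.1.2.1 := by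
        simpa [cellOf, Prod.ext_iff] using hce
      have := y.2.2
      rw [← h1.1, ← h1.2] at this
      omega

lemma T2_max_iff (x : XM M) :
    (∀ y : XM M, ¬ T2 x y) ↔
      IsWSECell M (cellOf x) ∧ x.1.2.2 = M x.1.1 x.1.2.1 - 1 := by
  constructor
  · intro h
    refine ⟨⟨nz_cellOf x, fun c' hc' hne hnw => ?_⟩, ?_⟩
    · exact h (mkXM c' hc' 0 (Nat.pos_of_ne_zero hc'.2)) (Or.inl hnw)
    · by_contra ha
      have hlt : x.1.2.2 + 1 < M x.1.1 x.1.2.1 := by have := x.2.2; omega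
      exact h (mkXM (cellOf x) (nz_cellOf x) (x.1.2.2 + 1) hlt)
        (Or.inr ⟨rfl, Nat.lt_succ_self _⟩)
  · rintro ⟨⟨_, h⟩, ha⟩ y hy
    rcases hy with hnw | ⟨hce, hab⟩
    · exact h (cellOf y) (nz_cellOf y) (Ne.symm hnw.1) hnw
    · have h1 : x.1.1 = y.1.1 ∧ x.1.2.1 = y.1.2.1 := by
        simpa [cellOf, Prod.ext_iff] using hce
      have := y.2.2
      rw [← h1.1, ← h1.2] at this
      omega

/-- Elements whose cell satisfies a cell-predicate, as a sigma type. -/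
noncomputable def toSigma (P : Cell m → Prop) (hP : ∀ c, P c → NonzeroCell M c) :
    {x : XM M // P (cellOf x)} ≃ Σ c : {c : Cell m // P c}, Fin (M c.1.1 c.1.2) where
  toFun x := ⟨⟨cellOf x.1, x.2⟩, ⟨x.1.1.2.2, x.1.2.2⟩⟩
  invFun p := ⟨⟨(p.1.1.1, p.1.1.2, (p.2 : ℕ)), (hP _ p.1.2).1, p.2.2⟩, p.1.2⟩
  left_inv x := rfl
  right_inv p := rfl

/-- Top elements of cells satisfying a cell-predicate, in bijection with the cells. -/
noncomputable def toCells (P : Cell m → Prop) (hP : ∀ c, P c → NonzeroCell M c) :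
    {x : XM M // P (cellOf x) ∧ x.1.2.2 = M x.1.1 x.1.2.1 - 1} ≃ {c : Cell m // P c} where
  toFun x := ⟨cellOf x.1, x.2.1⟩
  invFun c := ⟨⟨(c.1.1, c.1.2, M c.1.1 c.1.2 - 1), (hP _ c.2).1,
      Nat.sub_lt (Nat.pos_of_ne_zero (hP _ c.2).2) one_pos⟩, c.2, rfl⟩
  left_inv x := by
    obtain ⟨⟨⟨i, j, a⟩, hx⟩, hP', ha⟩ := x
    exact Subtype.ext (Subtype.ext (Prod.ext rfl (Prod.ext rfl ha.symm)))
  right_inv c := rfl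

lemma card_sum (P : Cell m → Prop) (hP : ∀ c, P c → NonzeroCell M c) :
    Nat.card {x : XM M // P (cellOf x)} =
      ∑ c : Cell m, if P c then M c.1 c.2 else 0 := by
  rw [Nat.card_congr (toSigma P hP), Nat.card_eq_fintype_card, Fintype.card_sigma]
  simp only [Fintype.card_fin]
  rw [← Finset.sum_subtype (Finset.univ.filter P) (by simp) (fun c : Cell m => M c.1 c.2),
    Finset.sum_filter]

lemma card_cells (P : Cell m → Prop) (hP : ∀ c, P c → NonzeroCell M c) :
    Nat.card {x : XM M // P (cellOf x) ∧ x.1.2.2 = M x.1.1 x.1.2.1 - 1} =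
      Nat.card {c : Cell m // P c} :=
  Nat.card_congr (toCells P hP)

end Aux

/-- Observation 4 (obs-extreme): the maximal-element statistics of the F1- and F2-triples
of a Fishburn matrix in terms of extreme cells. -/
theorem stmt_13 {m : ℕ} (hm : 0 < m) (M : Fin m → Fin m → ℕ) (hM : IsFishburn M) :
    mmax (S1 (M := M)) = wNEcount M ∧
    mmax (S2 (M := M)) = sNEweight M ∧
    mmax (T1 (M := M)) = sSEweight M ∧
    mmax (T2 (M := M)) = wSEcount M := by
  refine ⟨?_, ?_, ?_, ?_⟩
  · rw [mmax, Nat.card_congr (Equiv.subtypeEquivRight (fun x => S1_max_iff x)),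
      card_cells _ (fun c hc => hc.1)]
    rfl
  · rw [mmax, Nat.card_congr (Equiv.subtypeEquivRight (fun x => S2_max_iff x)),
      card_sum _ (fun c hc => hc.1)]
    rfl
  · rw [mmax, Nat.card_congr (Equiv.subtypeEquivRight (fun x => T1_max_iff x)),
      card_sum _ (fun c hc => hc.1)]
    rfl
  · rw [mmax, Nat.card_congr (Equiv.subtypeEquivRight (fun x => T2_max_iff x)),
      card_cells _ (fun c hc => hc.1)]
    rfl

end FishburnPaper
end

section
/- If (S,R) is a C1-pair on a finite set X, then the relation S ∪ R is a strict linear order on X, i.e., it is irreflexive, transitive, and any two distinct elements of X are comparable by it. -/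
open scoped Classical

namespace FishburnPaper

universe u

/-- If `(S,R)` is a C1-pair on a finite set `X`, then `S ∪ R` is a strict linear order:
irreflexive, transitive, and any two distinct elements are comparable by it. -/
theorem stmt_17 {X : Type u} [Finite X] (S R : X → X → Prop) (h : IsC1Pair S R) :
    StrictOrd (fun x y => S x y ∨ R x y) ∧
    ∀ x y : X, x ≠ y → Cmp (fun a b => S a b ∨ R a b) x y := by
  obtain ⟨⟨hSirr, hStr⟩, ⟨hRirr, hRtr⟩, hxor, hc1⟩ := h
  have hneS : ∀ {a b : X}, S a b → a ≠ b := by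
    rintro a b h rfl; exact hSirr a h
  have hneR : ∀ {a b : X}, R a b → a ≠ b := by
    rintro a b h rfl; exact hRirr a h
  have key : ∀ {a b : X}, S a b → R b a → False := by
    intro a b hs hr
    rcases hxor a b (hneS hs) with ⟨_, hn⟩ | ⟨_, hn⟩
    · exact hn (Or.inr hr)
    · exact hn (Or.inl hs)
  refine ⟨⟨fun x hx => hx.elim (hSirr x) (hRirr x), ?_⟩, ?_⟩
  · rintro x y z (hxy | hxy) (hyz | hyz)
    · exact Or.inl (hStr hxy hyz)
    · -- S x y, R y z
      have hxz : x ≠ z := by rintro rfl; exact key hxy hyz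
      exact Or.inr (hc1 x y z (hneS hxy) (hneR hyz) hxz hxy hyz)
    · -- R x y, S y z
      have hxz : x ≠ z := by rintro rfl; exact key hyz hxy
      by_contra hcon
      push_neg at hcon
      rcases hxor x z hxz with ⟨hc, _⟩ | ⟨hc, _⟩
      · rcases hc with h1 | h1
        · exact hcon.1 h1
        · -- z S x, x R y ⇒ z R y, contra with y S z
          have hzy : z ≠ y := by rintro rfl; exact key h1 hxy
          have : R z y := hc1 z x y (hneS h1) (hneR hxy) hzy h1 hxy
          exact key hyz this
      · rcases hc with h1 | h1
        · exact hcon.2 h1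
        · -- z R x, y S z ⇒ y R x, contra with x R y
          have hyx : y ≠ x := by rintro rfl; exact hRirr _ hxy
          have : R y x := hc1 y z x (hneS hyz) (hneR h1) hyx hyz h1
          exact hRirr x (hRtr hxy this)
    · exact Or.inr (hRtr hxy hyz)
  · intro x y hxy
    rcases hxor x y hxy with ⟨hc, _⟩ | ⟨hc, _⟩
    · exact hc.elim (fun h => Or.inl (Or.inl h)) (fun h => Or.inr (Or.inl h))
    · exact hc.elim (fun h => Or.inl (Or.inr h)) (fun h => Or.inr (Or.inr h))

end FishburnPaper
end

section
/- For each k ≥ 1, let P_k be the polynomial in ℤ[x,y,z] defined by P_k = Σ_M x^{pc(M)} · y^{lc(M)−1} · z^{ne(M)}, where the sum is over all primitive Fishburn matrices M of size k, lc(M) is the weight of the last column of M, pc(M) is the total weight of the first k−1 columns of M, and ne(M) is the number of wNE-cells of M. Then for every k ≥ 1 the identity P_{k+1}(x,y,z) = (xz + xy + y) · P_k(x, x+y+xy, z) − y · P_k(x,y,z) holds in ℤ[x,y,z], where P_k(x, x+y+xy, z) denotes the polynomial obtained from P_k by substituting x+y+xy for the variable y. -/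
open scoped Classical

namespace FishburnPaper

universe u

open MvPolynomial in
/-- The polynomial `P_k = Σ_M x^{pc(M)} y^{lc(M)-1} z^{ne(M)}`, summed over all primitive
Fishburn matrices `M` of size `k` (encoded as 0/1-matrices via `Fin 2`). The variables
`x`, `y`, `z` are `X 0`, `X 1`, `X 2`. -/
noncomputable def Pk (k : ℕ) : MvPolynomial (Fin 3) ℤ :=
  ∑ M : Fin k → Fin k → Fin 2,
    if IsFishburn (fun i j => ((M i j : ℕ))) then
      X 0 ^ prevColWeight (fun i j => ((M i j : ℕ))) *
      X 1 ^ (lastColWeight (fun i j => ((M i j : ℕ))) - 1) *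
      X 2 ^ wNEcount (fun i j => ((M i j : ℕ)))
    else 0


/-!
Deleting the last row of a primitive Fishburn matrix `M` of size `k + 1` and merging its last
two columns by entrywise maximum gives a primitive Fishburn matrix `N` of size `k`. Conversely,
`M` is recovered from `N` by deciding, for every nonzero entry of the last column of `N`, whether
it stays, moves to the new last column, or is copied to both; the only forbidden decision is that
all of them move, which would empty column `k` of `M`.

An entry that stays or is copied adds `1` to `pc`, one that moves or is copied adds `1` to `lc`,
and `ne` grows by one exactly when the topmost entry of the last column of `N` stays: it is then a
wNE-cell next to the top of the new last column. So the decisions factor over the rows: the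
topmost entry contributes `xz + y + xy`, every other entry `x + y + xy`, and the forbidden
decision contributes `y ^ lc(N)`.
-/

open Finset MvPolynomial

section Cells

variable {m : ℕ} (M : Fin m → Fin m → ℕ)

theorem isWNECell_iff {c : Cell m} :
    IsWNECell M c ↔
      NonzeroCell M c ∧ ∀ c', NonzeroCell M c' → c'.1 ≤ c.1 → c.2 ≤ c'.2 → c' = c := by
  refine and_congr_right fun _ => forall_congr' fun c' => ?_
  simp only [WeakSW]
  grind

theorem wNEcount_eq_sum :
    wNEcount M = ∑ j, ∑ i, if IsWNECell M (i, j) then 1 else 0 := by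
  rw [wNEcount, Nat.card_eq_fintype_card, Fintype.card_subtype, card_filter,
    Fintype.sum_prod_type, sum_comm]

end Cells

section LastColumn

variable {m : ℕ} (M : Fin (m + 1) → Fin (m + 1) → ℕ)

def IsTopOfLastCol (i : Fin (m + 1)) : Prop :=
  M i (Fin.last m) ≠ 0 ∧ ∀ i' < i, M i' (Fin.last m) = 0

theorem isWNECell_last_iff (i : Fin (m + 1)) :
    IsWNECell M (i, Fin.last m) ↔ IsTopOfLastCol M i := by
  simp only [isWNECell_iff, NonzeroCell, IsTopOfLastCol, Prod.forall, Prod.mk.injEq,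
    Fin.le_last, true_and]
  refine and_congr_right fun _ => ⟨fun h i' hi' => ?_, fun h a b hab hai hb => ?_⟩
  · by_contra hne
    exact hi'.ne (h i' _ ⟨Fin.le_last i', hne⟩ hi'.le le_rfl).1
  · obtain rfl := le_antisymm (Fin.le_last b) hb
    exact ⟨hai.eq_or_lt.resolve_right fun hlt => hab.2 (h a hlt), rfl⟩

theorem existsUnique_isTopOfLastCol (h : ∃ i, M i (Fin.last m) ≠ 0) :
    ∃! i, IsTopOfLastCol M i := by
  classical
  set S := univ.filter fun i => M i (Fin.last m) ≠ 0
  have hS : S.Nonempty := by simpa [S, Finset.Nonempty] using h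
  have htop : IsTopOfLastCol M (S.min' hS) := by
    refine ⟨(mem_filter.1 (S.min'_mem hS)).2, fun i' hi' => ?_⟩
    by_contra hne
    exact hi'.not_ge (S.min'_le i' (mem_filter.2 ⟨mem_univ _, hne⟩))
  refine ⟨S.min' hS, htop, fun j hj => ?_⟩
  by_contra hne
  rcases lt_or_gt_of_ne hne with hlt | hlt
  · exact hj.1 (htop.2 j hlt)
  · exact htop.1 (hj.2 _ hlt)

theorem not_isWNECell_last_castSucc (j : Fin m) : ¬ IsWNECell M (Fin.last m, j.castSucc) :=
  fun h => (Fin.castSucc_lt_last j).not_ge h.1.1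

theorem wNEcount_eq_sum_castSucc_add_one (h : ∃ i, M i (Fin.last m) ≠ 0) :
    wNEcount M = ∑ j : Fin m, ∑ i, (if IsWNECell M (i, j.castSucc) then 1 else 0) + 1 := by
  obtain ⟨r, hr, huniq⟩ := existsUnique_isTopOfLastCol M h
  rw [wNEcount_eq_sum, Fin.sum_univ_castSucc]
  simp only [isWNECell_last_iff]
  rw [sum_eq_single r (fun i _ hi => if_neg fun h => hi (huniq i h)) (by simp), if_pos hr]

theorem prevColWeight_eq_sum : prevColWeight M = ∑ i, ∑ j : Fin m, M i j.castSucc := by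
  rw [prevColWeight, Fintype.sum_prod_type]
  simp [Fin.sum_univ_castSucc]

theorem lastColWeight_eq_sum : lastColWeight M = ∑ i, M i (Fin.last m) := by
  rw [lastColWeight, Fintype.sum_prod_type]
  simp [Fin.sum_univ_castSucc, Fin.val_castSucc, Nat.ne_of_lt]

theorem lastColWeight_ne_zero (h : ∃ i, M i (Fin.last m) ≠ 0) : lastColWeight M ≠ 0 := by
  obtain ⟨i, hi⟩ := h
  rw [lastColWeight_eq_sum, Ne, sum_eq_zero_iff]
  exact fun h => hi (h i (mem_univ i))

end LastColumn

def toNatMatrix {m : ℕ} (M : Fin m → Fin m → Fin 2) : Fin m → Fin m → ℕ := fun i j => M i j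

@[simp]
theorem toNatMatrix_eq_zero {m : ℕ} {M : Fin m → Fin m → Fin 2} {i j : Fin m} :
    toNatMatrix M i j = 0 ↔ M i j = 0 :=
  Fin.val_eq_zero_iff

theorem toNatMatrix_eq_one_of_ne_zero {m : ℕ} {M : Fin m → Fin m → Fin 2} {i j : Fin m}
    (h : M i j ≠ 0) : toNatMatrix M i j = 1 := by
  have := (M i j).isLt
  have := toNatMatrix_eq_zero.not.2 h
  simp only [toNatMatrix] at this ⊢
  omega

theorem nonzeroCell_toNatMatrix {m : ℕ} {M : Fin m → Fin m → Fin 2} {c : Cell m} :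
    NonzeroCell (toNatMatrix M) c ↔ c.1 ≤ c.2 ∧ M c.1 c.2 ≠ 0 := by
  simp [NonzeroCell]

theorem isFishburn_toNatMatrix_iff {m : ℕ} {M : Fin m → Fin m → Fin 2} :
    IsFishburn (toNatMatrix M) ↔
      (∀ i j, j < i → M i j = 0) ∧ (∀ i, ∃ j, M i j ≠ 0) ∧ (∀ j, ∃ i, M i j ≠ 0) := by
  simp only [IsFishburn, ne_eq, toNatMatrix_eq_zero]

section Splitting

variable {n : ℕ}

/-- The entry of `N` in row `i` of its last column is kept in column `n` (`g i = 0`), moved to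
the new column `n + 1` (`g i = 1`), or copied to both (`g i = 2`); the new bottom row holds only
the corner. -/
def assemble (N : Fin (n + 1) → Fin (n + 1) → Fin 2) (g : Fin (n + 1) → Fin 3) :
    Fin (n + 2) → Fin (n + 2) → Fin 2 :=
  Fin.lastCases (fun j => if j = Fin.last _ then 1 else 0)
    (fun i => Fin.lastCases (if g i = 0 then 0 else N i (Fin.last n))
      (fun j => if j = Fin.last n ∧ g i = 1 then 0 else N i j))

def merge (M : Fin (n + 2) → Fin (n + 2) → Fin 2) : Fin (n + 1) → Fin (n + 1) → Fin 2 :=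
  fun i j => if j = Fin.last n then max (M i.castSucc j.castSucc) (M i.castSucc (Fin.last _))
    else M i.castSucc j.castSucc

def splitOf (M : Fin (n + 2) → Fin (n + 2) → Fin 2) : Fin (n + 1) → Fin 3 :=
  fun i => if M i.castSucc (Fin.last _) = 0 then 0
    else if M i.castSucc (Fin.last n).castSucc = 0 then 1 else 2

def splitOptions (N : Fin (n + 1) → Fin (n + 1) → Fin 2) (i : Fin (n + 1)) : Finset (Fin 3) :=
  if N i (Fin.last n) = 0 then {0} else univ

def allMoved (N : Fin (n + 1) → Fin (n + 1) → Fin 2) (i : Fin (n + 1)) : Fin 3 :=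
  if N i (Fin.last n) = 0 then 0 else 1

def validSplits (N : Fin (n + 1) → Fin (n + 1) → Fin 2) : Finset (Fin (n + 1) → Fin 3) :=
  (Fintype.piFinset (splitOptions N)).erase (allMoved N)

variable (N : Fin (n + 1) → Fin (n + 1) → Fin 2) (g : Fin (n + 1) → Fin 3)

@[simp]
theorem assemble_last (j : Fin (n + 2)) :
    assemble N g (Fin.last _) j = if j = Fin.last _ then 1 else 0 := by
  simp [assemble]

@[simp]
theorem assemble_castSucc_last (i : Fin (n + 1)) :
    assemble N g i.castSucc (Fin.last _) = if g i = 0 then 0 else N i (Fin.last n) := by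
  simp [assemble]

@[simp]
theorem assemble_castSucc_castSucc (i j : Fin (n + 1)) :
    assemble N g i.castSucc j.castSucc = if j = Fin.last n ∧ g i = 1 then 0 else N i j := by
  simp [assemble]

theorem merge_assemble : merge (assemble N g) = N := by
  funext i j
  by_cases hj : j = Fin.last n
  · subst hj
    simp only [merge, if_true, assemble_castSucc_castSucc, assemble_castSucc_last, true_and]
    generalize g i = c, N i (Fin.last n) = a
    revert c a; decide
  · simp [merge, hj]

theorem splitOf_assemble (hg : g ∈ Fintype.piFinset (splitOptions N)) :
    splitOf (assemble N g) = g := by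
  funext i
  have hi := Fintype.mem_piFinset.1 hg i
  simp only [splitOf, splitOptions, assemble_castSucc_last, assemble_castSucc_castSucc,
    true_and] at hi ⊢
  generalize g i = c, N i (Fin.last n) = a at hi ⊢
  revert c a; decide

theorem exists_ne_zero_and_ne_one_of_mem_validSplits (hg : g ∈ validSplits N) :
    ∃ i, N i (Fin.last n) ≠ 0 ∧ g i ≠ 1 := by
  obtain ⟨hne, hg⟩ := mem_erase.1 hg
  by_contra! h
  refine hne (funext fun i => ?_)
  have hi := Fintype.mem_piFinset.1 hg i
  by_cases h0 : N i (Fin.last n) = 0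
  · simpa [allMoved, splitOptions, h0] using hi
  · simp [allMoved, h0, h i h0]

theorem isFishburn_assemble (hN : IsFishburn (toNatMatrix N)) (hg : g ∈ validSplits N) :
    IsFishburn (toNatMatrix (assemble N g)) := by
  rw [isFishburn_toNatMatrix_iff] at hN ⊢
  obtain ⟨htri, hrow, hcol⟩ := hN
  refine ⟨fun i j hji => ?_, fun i => ?_, fun j => ?_⟩
  · induction i using Fin.lastCases with
    | last => simp [hji.ne]
    | cast i =>
      induction j using Fin.lastCases with
      | last => exact absurd hji (Fin.castSucc_lt_last i).not_gt
      | cast j => simp [htri i j (Fin.castSucc_lt_castSucc_iff.1 hji)]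
  · induction i using Fin.lastCases with
    | last => exact ⟨Fin.last _, by simp⟩
    | cast i =>
      obtain ⟨j, hj⟩ := hrow i
      by_cases hmoved : j = Fin.last n ∧ g i = 1
      · obtain ⟨rfl, hgi⟩ := hmoved
        exact ⟨Fin.last _, by simp [hgi, hj]⟩
      · exact ⟨j.castSucc, by simp [hmoved, hj]⟩
  · induction j using Fin.lastCases with
    | last => exact ⟨Fin.last _, by simp⟩
    | cast j =>
      by_cases hj : j = Fin.last n
      · subst hj
        obtain ⟨i, hi, hgi⟩ := exists_ne_zero_and_ne_one_of_mem_validSplits N g hg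
        exact ⟨i.castSucc, by simp [hgi, hi]⟩
      · obtain ⟨i, hi⟩ := hcol j
        exact ⟨i.castSucc, by simp [hj, hi]⟩

end Splitting

section Merging

variable {n : ℕ} {M : Fin (n + 2) → Fin (n + 2) → Fin 2}

theorem exists_castSucc_of_ne_zero (htri : ∀ i j, j < i → M i j = 0) {u : Fin (n + 2)}
    {j : Fin (n + 1)} (hu : M u j.castSucc ≠ 0) : ∃ i : Fin (n + 1), u = i.castSucc := by
  refine (Fin.eq_castSucc_or_eq_last u).resolve_right ?_
  rintro rfl
  exact hu (htri _ _ (Fin.castSucc_lt_last j))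

theorem isFishburn_merge (hM : IsFishburn (toNatMatrix M)) :
    IsFishburn (toNatMatrix (merge M)) := by
  rw [isFishburn_toNatMatrix_iff] at hM ⊢
  obtain ⟨htri, hrow, hcol⟩ := hM
  refine ⟨fun i j hji => ?_, fun i => ?_, fun j => ?_⟩
  · simp [merge, (hji.trans_le (Fin.le_last i)).ne, htri _ _ (Fin.castSucc_lt_castSucc_iff.2 hji)]
  · obtain ⟨j, hj⟩ := hrow i.castSucc
    induction j using Fin.lastCases with
    | last => exact ⟨Fin.last n, by simp [merge, hj]⟩
    | cast j => exact ⟨j, by unfold merge; split_ifs <;> simp [hj]⟩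
  · obtain ⟨u, hu⟩ := hcol j.castSucc
    obtain ⟨i, rfl⟩ := exists_castSucc_of_ne_zero htri hu
    exact ⟨i, by unfold merge; split_ifs <;> simp [hu]⟩

theorem splitOf_mem_validSplits (hM : IsFishburn (toNatMatrix M)) :
    splitOf M ∈ validSplits (merge M) := by
  rw [isFishburn_toNatMatrix_iff] at hM
  obtain ⟨htri, -, hcol⟩ := hM
  refine mem_erase.2 ⟨fun h => ?_, Fintype.mem_piFinset.2 fun i => ?_⟩
  · obtain ⟨u, hu⟩ := hcol (Fin.last n).castSucc
    obtain ⟨i, rfl⟩ := exists_castSucc_of_ne_zero htri hu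
    have hi := congrFun h i
    simp only [splitOf, allMoved, merge, if_true] at hi
    revert hu hi
    generalize M i.castSucc (Fin.last n).castSucc = a, M i.castSucc (Fin.last _) = b
    revert a b; decide
  · simp only [splitOf, splitOptions, merge, if_true]
    generalize M i.castSucc (Fin.last n).castSucc = a, M i.castSucc (Fin.last _) = b
    revert a b; decide

theorem assemble_merge_splitOf (hM : IsFishburn (toNatMatrix M)) :
    assemble (merge M) (splitOf M) = M := by
  rw [isFishburn_toNatMatrix_iff] at hM
  obtain ⟨htri, hrow, -⟩ := hM
  funext i j
  induction i using Fin.lastCases with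
  | last =>
    obtain ⟨j', hj'⟩ := hrow (Fin.last _)
    obtain rfl : j' = Fin.last _ := by
      by_contra hne
      exact hj' (htri _ _ (Fin.lt_last_iff_ne_last.2 hne))
    induction j using Fin.lastCases with
    | last =>
      simp only [assemble_last, if_true]
      revert hj'
      generalize M (Fin.last _) (Fin.last _) = a
      revert a; decide
    | cast j => simp [htri _ _ (Fin.castSucc_lt_last j), (Fin.castSucc_lt_last j).ne]
  | cast i =>
    induction j using Fin.lastCases with
    | last =>
      simp only [assemble_castSucc_last, splitOf, merge, if_true]
      generalize M i.castSucc (Fin.last n).castSucc = a, M i.castSucc (Fin.last _) = b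
      revert a b; decide
    | cast j =>
      by_cases hj : j = Fin.last n
      · subst hj
        simp only [assemble_castSucc_castSucc, splitOf, merge, if_true, true_and]
        generalize M i.castSucc (Fin.last n).castSucc = a, M i.castSucc (Fin.last _) = b
        revert a b; decide
      · simp [merge, hj]

end Merging

theorem exists_castSucc_eq_of_le_castSucc {n : ℕ} {u : Fin (n + 1)} {i : Fin n}
    (h : u ≤ i.castSucc) : ∃ a ≤ i, u = a.castSucc := by
  obtain ⟨a, rfl⟩ | rfl := Fin.eq_castSucc_or_eq_last u
  · exact ⟨a, Fin.castSucc_le_castSucc_iff.1 h, rfl⟩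
  · exact absurd h (Fin.castSucc_lt_last i).not_ge

section Statistics

variable {n : ℕ} (N : Fin (n + 1) → Fin (n + 1) → Fin 2) (g : Fin (n + 1) → Fin 3)

theorem isWNECell_assemble_castSucc (i : Fin (n + 1)) (j : Fin n) :
    IsWNECell (toNatMatrix (assemble N g)) (i.castSucc, j.castSucc.castSucc) ↔
      IsWNECell (toNatMatrix N) (i, j.castSucc) := by
  simp only [isWNECell_iff, nonzeroCell_toNatMatrix, Prod.forall, Prod.mk.injEq,
    Fin.castSucc_le_castSucc_iff, assemble_castSucc_castSucc, Fin.castSucc_ne_last, false_and,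
    if_false]
  refine and_congr_right fun _ => ⟨fun hmax a b hab hai hjb => ?_, fun hmax u v huv hui hjv => ?_⟩
  · by_cases hmoved : b = Fin.last n ∧ g a = 1
    · obtain ⟨rfl, hga⟩ := hmoved
      have := hmax a.castSucc (Fin.last _) ⟨Fin.le_last _, by simp [hga, hab.2]⟩
        (Fin.castSucc_le_castSucc_iff.2 hai) (Fin.le_last _)
      exact absurd this.2 (Fin.castSucc_lt_last _).ne'
    · have := hmax a.castSucc b.castSucc
        ⟨Fin.castSucc_le_castSucc_iff.2 hab.1, by simp [hmoved, hab.2]⟩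
        (Fin.castSucc_le_castSucc_iff.2 hai) (Fin.castSucc_le_castSucc_iff.2 hjb)
      simpa using this
  · obtain ⟨a, hai, rfl⟩ := exists_castSucc_eq_of_le_castSucc hui
    induction v using Fin.lastCases with
    | last =>
      simp only [assemble_castSucc_last, ne_eq, ite_eq_left_iff, not_forall] at huv
      obtain ⟨-, hga, hN⟩ := huv
      exact absurd (hmax a _ ⟨Fin.le_last a, hN⟩ hai (Fin.le_last _)).2
        (Fin.castSucc_lt_last j).ne'
    | cast b =>
      simp only [assemble_castSucc_castSucc, Fin.castSucc_le_castSucc_iff] at huv hjv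
      have := hmax a b ⟨huv.1, fun h => huv.2 (by simp [h])⟩ hai hjv
      simp [this.1, this.2]

theorem isWNECell_assemble_castSucc_last (i : Fin (n + 1)) :
    IsWNECell (toNatMatrix (assemble N g)) (i.castSucc, (Fin.last n).castSucc) ↔
      IsTopOfLastCol (toNatMatrix N) i ∧ g i = 0 := by
  simp only [isWNECell_iff, nonzeroCell_toNatMatrix, IsTopOfLastCol, Prod.forall, Prod.mk.injEq,
    Fin.castSucc_le_castSucc_iff, assemble_castSucc_castSucc, true_and, toNatMatrix_eq_zero,
    Fin.le_last, ne_eq, ite_eq_left_iff, not_forall]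
  constructor
  · rintro ⟨⟨hg1, hN⟩, hmax⟩
    have hg0 : g i = 0 := by
      by_contra hg0
      have := hmax i.castSucc (Fin.last _) ⟨Fin.le_last _, by simp [hg0, hN]⟩ le_rfl
        (Fin.le_last _)
      exact (Fin.castSucc_lt_last _).ne' this.2
    refine ⟨⟨hN, fun i' hi' => ?_⟩, hg0⟩
    by_contra hN'
    by_cases hg1' : g i' = 1
    · have := hmax i'.castSucc (Fin.last _) ⟨Fin.le_last _, by simp [hg1', hN']⟩
        (Fin.castSucc_le_castSucc_iff.2 hi'.le) (Fin.le_last _)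
      exact (Fin.castSucc_lt_last _).ne' this.2
    · have := hmax i'.castSucc (Fin.last n).castSucc
        ⟨Fin.castSucc_le_castSucc_iff.2 (Fin.le_last _), by simp [hg1', hN']⟩
        (Fin.castSucc_le_castSucc_iff.2 hi'.le) le_rfl
      exact hi'.ne (Fin.castSucc_injective _ this.1)
  · rintro ⟨⟨hN, htop⟩, hg0⟩
    refine ⟨⟨by simp [hg0], hN⟩, fun u v huv hui hv => ?_⟩
    obtain ⟨a, hai, rfl⟩ := exists_castSucc_eq_of_le_castSucc hui
    have hsame : ∀ a ≤ i, N a (Fin.last n) ≠ 0 → a = i := fun a hai ha =>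
      hai.eq_or_lt.resolve_right fun hlt => ha (htop a hlt)
    induction v using Fin.lastCases with
    | last =>
      simp only [assemble_castSucc_last, ite_eq_left_iff, not_forall] at huv
      obtain ⟨-, hga, hNa⟩ := huv
      exact absurd (hsame a hai hNa ▸ hga) (not_not.2 hg0)
    | cast b =>
      obtain rfl : b = Fin.last n := le_antisymm (Fin.le_last b) (Fin.castSucc_le_castSucc_iff.1 hv)
      simp only [assemble_castSucc_castSucc, true_and, ite_eq_left_iff, not_forall] at huv
      exact ⟨by rw [hsame a hai huv.2.2], rfl⟩

theorem wNEcount_assemble (hN : ∃ i, N i (Fin.last n) ≠ 0) :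
    wNEcount (toNatMatrix (assemble N g)) = wNEcount (toNatMatrix N) +
      ∑ i, if IsTopOfLastCol (toNatMatrix N) i ∧ g i = 0 then 1 else 0 := by
  rw [wNEcount_eq_sum_castSucc_add_one _ ⟨Fin.last _, by simp⟩,
    wNEcount_eq_sum_castSucc_add_one _ (by simpa using hN), Fin.sum_univ_castSucc]
  simp only [Fin.sum_univ_castSucc (n := n + 1), not_isWNECell_last_castSucc, if_false, add_zero,
    isWNECell_assemble_castSucc, isWNECell_assemble_castSucc_last]
  ring

theorem prevColWeight_assemble :
    prevColWeight (toNatMatrix (assemble N g)) =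
      prevColWeight (toNatMatrix N) + ∑ i, if g i = 1 then 0 else toNatMatrix N i (Fin.last n) := by
  have hlast : ∑ j : Fin (n + 1), toNatMatrix (assemble N g) (Fin.last _) j.castSucc = 0 := by
    simp [toNatMatrix, Fin.castSucc_ne_last]
  rw [prevColWeight_eq_sum, prevColWeight_eq_sum, Fin.sum_univ_castSucc, hlast, add_zero,
    ← sum_add_distrib]
  refine sum_congr rfl fun i _ => ?_
  rw [Fin.sum_univ_castSucc]
  simp [toNatMatrix, apply_ite Fin.val]

theorem lastColWeight_assemble :
    lastColWeight (toNatMatrix (assemble N g)) =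
      (∑ i, if g i = 0 then 0 else toNatMatrix N i (Fin.last n)) + 1 := by
  rw [lastColWeight_eq_sum, Fin.sum_univ_castSucc]
  simp [toNatMatrix, apply_ite Fin.val]

end Statistics

section Polynomials

noncomputable def statMonomial {m : ℕ} (M : Fin m → Fin m → ℕ) : MvPolynomial (Fin 3) ℤ :=
  X 0 ^ prevColWeight M * X 1 ^ (lastColWeight M - 1) * X 2 ^ wNEcount M

theorem Pk_eq_sum (k : ℕ) :
    Pk k = ∑ M : Fin k → Fin k → Fin 2,
      if IsFishburn (toNatMatrix M) then statMonomial (toNatMatrix M) else 0 :=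
  rfl

theorem bind₁_statMonomial {m : ℕ} (M : Fin m → Fin m → ℕ) :
    bind₁ (fun i : Fin 3 => if i = 1 then X 0 + X 1 + X 0 * X 1 else X i) (statMonomial M) =
      X 0 ^ prevColWeight M * (X 0 + X 1 + X 0 * X 1) ^ (lastColWeight M - 1) *
        X 2 ^ wNEcount M := by
  simp [statMonomial]

theorem Pk_add_two (n : ℕ) :
    Pk (n + 2) = ∑ N : Fin (n + 1) → Fin (n + 1) → Fin 2, if IsFishburn (toNatMatrix N) then
      ∑ g ∈ validSplits N, statMonomial (toNatMatrix (assemble N g)) else 0 := by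
  rw [Pk_eq_sum, ← sum_filter, ← sum_filter, sum_sigma']
  refine sum_nbij' (fun M => ⟨merge M, splitOf M⟩) (fun p => assemble p.1 p.2) ?_ ?_ ?_ ?_ ?_
  all_goals simp only [mem_sigma, mem_filter, mem_univ, true_and]
  · exact fun M hM => ⟨isFishburn_merge hM, splitOf_mem_validSplits hM⟩
  · exact fun p hp => isFishburn_assemble _ _ hp.1 hp.2
  · exact fun M hM => assemble_merge_splitOf hM
  · exact fun p hp => by rw [merge_assemble, splitOf_assemble _ _ (mem_erase.1 hp.2).2]
  · exact fun M hM => by rw [assemble_merge_splitOf hM]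

variable {n : ℕ} (N : Fin (n + 1) → Fin (n + 1) → Fin 2)

noncomputable def rowMonomial (i : Fin (n + 1)) (c : Fin 3) : MvPolynomial (Fin 3) ℤ :=
  X 0 ^ (if c = 1 then 0 else toNatMatrix N i (Fin.last n)) *
    X 1 ^ (if c = 0 then 0 else toNatMatrix N i (Fin.last n)) *
    X 2 ^ (if IsTopOfLastCol (toNatMatrix N) i ∧ c = 0 then 1 else 0)

theorem statMonomial_assemble (g : Fin (n + 1) → Fin 3) (hN : ∃ i, N i (Fin.last n) ≠ 0) :
    statMonomial (toNatMatrix (assemble N g)) =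
      X 0 ^ prevColWeight (toNatMatrix N) * X 2 ^ wNEcount (toNatMatrix N) *
        ∏ i, rowMonomial N i (g i) := by
  simp only [statMonomial, rowMonomial, prevColWeight_assemble, lastColWeight_assemble,
    wNEcount_assemble N g hN, Nat.add_sub_cancel, prod_mul_distrib, prod_pow_eq_pow_sum, pow_add]
  ring

theorem sum_rowMonomial (i : Fin (n + 1)) :
    ∑ c ∈ splitOptions N i, rowMonomial N i c =
      if IsTopOfLastCol (toNatMatrix N) i then X 0 * X 2 + X 0 * X 1 + X 1
      else (X 0 + X 1 + X 0 * X 1) ^ toNatMatrix N i (Fin.last n) := by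
  by_cases h0 : N i (Fin.last n) = 0
  · simp [splitOptions, rowMonomial, IsTopOfLastCol, h0, toNatMatrix_eq_zero.2 h0]
  · have h1 := toNatMatrix_eq_one_of_ne_zero h0
    by_cases htop : IsTopOfLastCol (toNatMatrix N) i
    · simp [splitOptions, rowMonomial, h0, h1, htop, Fin.sum_univ_three]
      ring
    · simp [splitOptions, rowMonomial, h0, h1, htop, Fin.sum_univ_three]

theorem prod_sum_rowMonomial (hN : ∃ i, N i (Fin.last n) ≠ 0) :
    ∏ i, (if IsTopOfLastCol (toNatMatrix N) i then X 0 * X 2 + X 0 * X 1 + X 1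
      else (X 0 + X 1 + X 0 * X 1) ^ toNatMatrix N i (Fin.last n)) =
      (X 0 * X 2 + X 0 * X 1 + X 1 : MvPolynomial (Fin 3) ℤ) *
        (X 0 + X 1 + X 0 * X 1) ^ (lastColWeight (toNatMatrix N) - 1) := by
  obtain ⟨r, hr, huniq⟩ := existsUnique_isTopOfLastCol (toNatMatrix N) (by simpa using hN)
  rw [← mul_prod_erase univ _ (mem_univ r), if_pos hr,
    prod_congr rfl fun i hi => if_neg fun h => (mem_erase.1 hi).1 (huniq i h),
    prod_pow_eq_pow_sum, lastColWeight_eq_sum, ← add_sum_erase univ _ (mem_univ r),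
    toNatMatrix_eq_one_of_ne_zero (toNatMatrix_eq_zero.not.1 hr.1),
    Nat.add_sub_cancel_left]

theorem prod_rowMonomial_allMoved :
    ∏ i, rowMonomial N i (allMoved N i) = X 1 ^ lastColWeight (toNatMatrix N) := by
  rw [lastColWeight_eq_sum, ← prod_pow_eq_pow_sum]
  refine prod_congr rfl fun i _ => ?_
  by_cases h0 : N i (Fin.last n) = 0 <;>
    simp [rowMonomial, allMoved, IsTopOfLastCol, h0, toNatMatrix_eq_zero.2]

theorem sum_validSplits (hN : ∃ i, N i (Fin.last n) ≠ 0) :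
    ∑ g ∈ validSplits N, statMonomial (toNatMatrix (assemble N g)) =
      X 0 ^ prevColWeight (toNatMatrix N) * X 2 ^ wNEcount (toNatMatrix N) *
        ((X 0 * X 2 + X 0 * X 1 + X 1) *
            (X 0 + X 1 + X 0 * X 1) ^ (lastColWeight (toNatMatrix N) - 1) -
          X 1 ^ lastColWeight (toNatMatrix N)) := by
  have hmoved : allMoved N ∈ Fintype.piFinset (splitOptions N) :=
    Fintype.mem_piFinset.2 fun i => by by_cases h0 : N i (Fin.last n) = 0 <;>
      simp [allMoved, splitOptions, h0]
  simp only [validSplits, sum_erase_eq_sub hmoved, statMonomial_assemble N _ hN, ← mul_sum,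
    ← prod_univ_sum, sum_rowMonomial, prod_sum_rowMonomial N hN, prod_rowMonomial_allMoved,
    mul_sub]

end Polynomials

open MvPolynomial in
/-- The recurrence `P_{k+1}(x,y,z) = (xz+xy+y)·P_k(x, x+y+xy, z) − y·P_k(x,y,z)`. -/
theorem stmt_18 (k : ℕ) (hk : 1 ≤ k) :
    Pk (k + 1) =
      (X 0 * X 2 + X 0 * X 1 + X 1) *
        (bind₁ (fun i : Fin 3 =>
          if i = 1 then X 0 + X 1 + X 0 * X 1 else X i) (Pk k)) -
      X 1 * Pk k := by
  obtain ⟨n, rfl⟩ : ∃ n, k = n + 1 := ⟨k - 1, by omega⟩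
  rw [Pk_add_two, Pk_eq_sum, map_sum, mul_sum, mul_sum, ← sum_sub_distrib]
  refine sum_congr rfl fun N _ => ?_
  split_ifs with hN
  · have hlast : ∃ i, N i (Fin.last n) ≠ 0 := (isFishburn_toNatMatrix_iff.1 hN).2.2 _
    rw [sum_validSplits N hlast, bind₁_statMonomial, statMonomial,
      ← mul_pow_sub_one (lastColWeight_ne_zero _ (by simpa using hlast))]
    ring
  · simp

end FishburnPaper
end
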